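/- Let (ρ₁,ρ₂,ρ₃) be a stable representation of the 3-Kronecker quiver of dimension vector (2,3), and define the linear map Φ : S²(ℂ²) → ⋀²(ℂ³) ⊗ ⋀²(ℂ³) by Φ(v·w) = Σ_{1≤k<l≤3} (ρ_k(v) ∧ ρ_l(w) + ρ_k(w) ∧ ρ_l(v)) ⊗ (e_k ∧ e_l), where e₁, e₂, e₃ is the standard basis of the second copy of ℂ³ (indexing the three arrows). Then Φ is injective. -/

import Mathlib

open TensorProduct

noncomputable section

/-- Stability (for the stability parameter θ = (3,−2)) of a representation `(ρ₁,ρ₂,ρ₃)` of the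
3-Kronecker quiver of dimension vector (2,3): for every subrepresentation `(U₁, U₂)` other than
`(0,0)` and `(ℂ², ℂ³)` one has `3·dim U₁ < 2·dim U₂`. -/
def KStable (ρ : Fin 3 → ((Fin 2 → ℂ) →ₗ[ℂ] (Fin 3 → ℂ))) : Prop :=
  ∀ (U₁ : Submodule ℂ (Fin 2 → ℂ)) (U₂ : Submodule ℂ (Fin 3 → ℂ)),
    (∀ k, U₁.map (ρ k) ≤ U₂) →
    ¬(U₁ = ⊥ ∧ U₂ = ⊥) → ¬(U₁ = ⊤ ∧ U₂ = ⊤) →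
    3 * Module.finrank ℂ U₁ < 2 * Module.finrank ℂ U₂

/-- The wedge product `u ∧ v ∈ ⋀²(ℂ³)`. -/
def wedge2 (u v : Fin 3 → ℂ) : ↥(⋀[ℂ]^2 (Fin 3 → ℂ)) :=
  ⟨ExteriorAlgebra.ιMulti ℂ 2 ![u, v],
    ExteriorAlgebra.ιMulti_range ℂ 2 (Set.mem_range_self ![u, v])⟩

/-- For a pair of indices `k, l` (with `k < l` in the intended use), the `(k,l)`-summand
`(ρ_k(v) ∧ ρ_l(w) + ρ_k(w) ∧ ρ_l(v)) ⊗ (e_k ∧ e_l)` of `Φ(v·w)`. -/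
def phiTerm (ρ : Fin 3 → ((Fin 2 → ℂ) →ₗ[ℂ] (Fin 3 → ℂ))) (v w : Fin 2 → ℂ)
    (k l : Fin 3) : ↥(⋀[ℂ]^2 (Fin 3 → ℂ)) ⊗[ℂ] ↥(⋀[ℂ]^2 (Fin 3 → ℂ)) :=
  (wedge2 (ρ k v) (ρ l w) + wedge2 (ρ k w) (ρ l v)) ⊗ₜ[ℂ]
    wedge2 (Pi.single k 1) (Pi.single l 1)

/-- The value `Φ(v·w) = Σ_{1≤k<l≤3} (ρ_k(v) ∧ ρ_l(w) + ρ_k(w) ∧ ρ_l(v)) ⊗ (e_k ∧ e_l)`;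
this is symmetric and bilinear in `(v,w)`, hence defines a linear map
`Φ : S²(ℂ²) → ⋀²(ℂ³) ⊗ ⋀²(ℂ³)`. -/
def phiPure (ρ : Fin 3 → ((Fin 2 → ℂ) →ₗ[ℂ] (Fin 3 → ℂ))) (v w : Fin 2 → ℂ) :
    ↥(⋀[ℂ]^2 (Fin 3 → ℂ)) ⊗[ℂ] ↥(⋀[ℂ]^2 (Fin 3 → ℂ)) :=
  phiTerm ρ v w 0 1 + phiTerm ρ v w 0 2 + phiTerm ρ v w 1 2

/-!
Over ℂ every element of S²(ℂ²) is a product v·w, so it suffices to show that Φ(v·w) ≠ 0 for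
v, w ≠ 0. Identifying ⋀²ℂ³ with ℂ³ through the cross product, Φ(v·w) = 0 says that
ρ_k(v) × ρ_l(w) is symmetric in (k, l). Writing a_k = ρ_k(v) and b_k = ρ_k(w), the triple product
a_m · (a_k × b_l) is then antisymmetric in (m, k) and symmetric in (k, l), hence zero; likewise
with a and b exchanged. Stability says that the vectors ρ_k(u), u ≠ 0, span at least a plane and
that the images of the ρ_k span ℂ³. If v and w are proportional, symmetry forces a_k × a_l = 0 for
all k, l, contradicting the first condition. Otherwise pick a_p × a_q ≠ 0: if it is orthogonal to
every a_r, it is orthogonal to every image, contradicting the second condition; if not, the a_r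
span ℂ³, and any nonzero b_p' × b_q' is orthogonal to all of them.
-/

open Matrix

lemma eq_zero_of_antisymm_of_symm {ι G : Type*} [AddGroup G] [IsAddTorsionFree G]
    {f : ι → ι → ι → G} (hanti : ∀ m k l, f m k l = -f k m l)
    (hsymm : ∀ m k l, f m k l = f m l k) (m k l : ι) : f m k l = 0 :=
  self_eq_neg.mp <| calc
    f m k l = -f k m l := hanti m k l
    _ = -f k l m := by rw [hsymm k m l]
    _ = f l k m := by rw [hanti k l m, neg_neg]
    _ = f l m k := hsymm l k m
    _ = -f m l k := hanti l m k
    _ = -f m k l := by rw [hsymm m l k]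

section CrossProduct

variable {R : Type*} [CommRing R]

lemma dotProduct_cross_swap (u v w : Fin 3 → R) : u ⬝ᵥ v ⨯₃ w = -(v ⬝ᵥ u ⨯₃ w) := by
  rw [triple_product_permutation, ← cross_anticomm, dotProduct_neg]

lemma dotProduct_cross_eq_zero_of_cross_symm [IsAddTorsionFree R] {ι : Type*}
    {a b : ι → Fin 3 → R} (h : ∀ k l, a k ⨯₃ b l = a l ⨯₃ b k) (m k l : ι) :
    a m ⬝ᵥ a k ⨯₃ b l = 0 :=
  eq_zero_of_antisymm_of_symm (f := fun m k l => a m ⬝ᵥ a k ⨯₃ b l)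
    (fun _ _ _ => dotProduct_cross_swap _ _ _) (fun m k l => by rw [h]) m k l

lemma cross_symm_of_forall_add_eq_zero {a b : Fin 3 → Fin 3 → R}
    (h : ∀ p, a (p + 1) ⨯₃ b (p + 2) + b (p + 1) ⨯₃ a (p + 2) = 0) (k l : Fin 3) :
    a k ⨯₃ b l = a l ⨯₃ b k := by
  have key : ∀ p, a (p + 1) ⨯₃ b (p + 2) = a (p + 2) ⨯₃ b (p + 1) := fun p =>
    (eq_neg_of_add_eq_zero_left (h p)).trans (cross_anticomm _ _)
  fin_cases k <;> fin_cases l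
  exacts [rfl, key 2, (key 1).symm, (key 2).symm, rfl, key 0, key 1, (key 0).symm, rfl]

lemma triple_product_smul (u v w n : Fin 3 → R) :
    (u ⬝ᵥ v ⨯₃ w) • n = (n ⬝ᵥ u) • v ⨯₃ w + (n ⬝ᵥ v) • w ⨯₃ u + (n ⬝ᵥ w) • u ⨯₃ v := by
  ext i
  fin_cases i <;> simp [cross_apply, vec3_dotProduct, vecHead, vecTail] <;> ring

lemma eq_zero_of_dotProduct_eq_zero_of_triple_product_ne_zero [IsDomain R]
    {u v w n : Fin 3 → R} (huvw : u ⬝ᵥ v ⨯₃ w ≠ 0) (hu : n ⬝ᵥ u = 0) (hv : n ⬝ᵥ v = 0)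
    (hw : n ⬝ᵥ w = 0) : n = 0 := by
  have h := triple_product_smul u v w n
  rw [hu, hv, hw] at h
  simpa [huvw] using h

end CrossProduct

section CrossProductField

variable {K : Type*} [Field K]

lemma mem_span_singleton_of_cross_eq_zero {x y : Fin 3 → K} (hx : x ≠ 0) (h : x ⨯₃ y = 0) :
    y ∈ K ∙ x := by
  have hdep : ¬LinearIndependent K ![x, y] := by
    rw [← crossProduct_ne_zero_iff_linearIndependent, not_not, h]
  rw [LinearIndependent.pair_iff' hx] at hdep
  push Not at hdep
  obtain ⟨a, rfl⟩ := hdep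
  exact Submodule.smul_mem _ a (Submodule.mem_span_singleton_self x)

lemma finrank_span_range_le_one_of_cross_eq_zero {ι : Type*} {x : ι → Fin 3 → K}
    (h : ∀ i j, x i ⨯₃ x j = 0) : Module.finrank K (Submodule.span K (Set.range x)) ≤ 1 := by
  obtain ⟨y, hy⟩ : ∃ y, ∀ j, x j ∈ K ∙ y := by
    by_cases hx : ∃ i, x i ≠ 0
    · obtain ⟨i, hi⟩ := hx
      exact ⟨x i, fun j => mem_span_singleton_of_cross_eq_zero hi (h i j)⟩
    · push Not at hx
      exact ⟨0, fun j => by simp [hx j]⟩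
  calc Module.finrank K (Submodule.span K (Set.range x))
      ≤ Module.finrank K (K ∙ y) :=
        Submodule.finrank_mono (Submodule.span_le.mpr (Set.range_subset_iff.mpr hy))
    _ ≤ 1 := (finrank_span_le_card {y}).trans (by simp)

end CrossProductField

lemma Matrix.IsSymm.exists_eq_vecMulVec_add_vecMulVec {K : Type*} [Field K] [IsAlgClosed K]
    [NeZero (2 : K)] {c : Matrix (Fin 2) (Fin 2) K} (hc : c.IsSymm) :
    ∃ v w : Fin 2 → K, c = vecMulVec v w + vecMulVec w v := by
  have h10 := hc.apply 0 1
  by_cases h00 : c 0 0 = 0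
  · refine ⟨![2 * c 0 1, c 1 1], ![0, 1 / 2], ?_⟩
    ext i j
    fin_cases i <;> fin_cases j <;> simp [h00, h10] <;> field_simp
    ring
  · obtain ⟨s, hs⟩ := IsAlgClosed.exists_pow_nat_eq (c 0 1 ^ 2 - c 0 0 * c 1 1) two_pos
    refine ⟨![c 0 0, c 0 1 + s], ![1 / 2, (c 0 1 - s) / (2 * c 0 0)], ?_⟩
    ext i j
    fin_cases i <;> fin_cases j <;> simp [h10] <;> field_simp
    · ring
    · ring
    · ring
    · linear_combination 2 * hs

namespace LinearMap

variable {n R M : Type*} [Fintype n] [DecidableEq n] [CommSemiring R] [AddCommMonoid M]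
  [Module R M]

lemma sum_sum_smul_apply_single (B : (n → R) →ₗ[R] (n → R) →ₗ[R] M) (v w : n → R) :
    ∑ i, ∑ j, (v i * w j) • B (Pi.single i 1) (Pi.single j 1) = B v w := by
  conv_rhs => rw [pi_eq_sum_univ' v, pi_eq_sum_univ' w]
  simp only [map_sum, map_smul, LinearMap.sum_apply, LinearMap.smul_apply, Finset.smul_sum,
    smul_smul, mul_comm]
  exact Finset.sum_comm

lemma sum_sum_symm_smul_apply_single (B : (n → R) →ₗ[R] (n → R) →ₗ[R] M) (v w : n → R) :
    ∑ i, ∑ j, (v i * w j + w i * v j) • B (Pi.single i 1) (Pi.single j 1) = B v w + B w v := by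
  simp only [add_smul, Finset.sum_add_distrib, B.sum_sum_smul_apply_single]

end LinearMap

section Wedge

variable (R : Type*) [CommRing R]

def crossProductAlternating : (Fin 3 → R) [⋀^Fin 2]→ₗ[R] (Fin 3 → R) where
  toFun m := m 0 ⨯₃ m 1
  map_update_add' m i x y := by fin_cases i <;> simp
  map_update_smul' m i c x := by fin_cases i <;> simp
  map_eq_zero_of_eq' m i j hij hne := by fin_cases i <;> fin_cases j <;> simp_all [cross_self]

def crossOfWedge : ⋀[R]^2 (Fin 3 → R) →ₗ[R] (Fin 3 → R) :=
  exteriorPower.alternatingMapLinearEquiv (crossProductAlternating R)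

/-- Extracts the `e_{p+1} ∧ e_{p+2}`-component of the second factor, mapping the first factor
to `R³` by `crossOfWedge`. -/
def wedgeTensorEval (p : Fin 3) :
    ⋀[R]^2 (Fin 3 → R) ⊗[R] ⋀[R]^2 (Fin 3 → R) →ₗ[R] (Fin 3 → R) :=
  (TensorProduct.rid R _).toLinearMap ∘ₗ
    TensorProduct.map (crossOfWedge R) (LinearMap.proj p ∘ₗ crossOfWedge R)

variable {R}

lemma wedgeTensorEval_tmul (p : Fin 3) (x y : ⋀[R]^2 (Fin 3 → R)) :
    wedgeTensorEval R p (x ⊗ₜ y) = crossOfWedge R y p • crossOfWedge R x := by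
  simp [wedgeTensorEval]

end Wedge

lemma crossOfWedge_wedge2 (u v : Fin 3 → ℂ) : crossOfWedge ℂ (wedge2 u v) = u ⨯₃ v := by
  have : wedge2 u v = exteriorPower.ιMulti ℂ 2 ![u, v] := rfl
  rw [this, crossOfWedge, exteriorPower.alternatingMapLinearEquiv_apply_ιMulti]
  rfl

lemma wedgeTensorEval_phiPure (ρ : Fin 3 → ((Fin 2 → ℂ) →ₗ[ℂ] (Fin 3 → ℂ))) (v w : Fin 2 → ℂ)
    (p : Fin 3) : wedgeTensorEval ℂ p (phiPure ρ v w) =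
      ρ (p + 1) v ⨯₃ ρ (p + 2) w + ρ (p + 1) w ⨯₃ ρ (p + 2) v := by
  simp only [phiPure, phiTerm, map_add, wedgeTensorEval_tmul, crossOfWedge_wedge2]
  fin_cases p <;> simp [cross_apply, ← cross_anticomm ((ρ 0) _)]

lemma cross_symm_of_sum_smul_phiPure_eq_zero (ρ : Fin 3 → ((Fin 2 → ℂ) →ₗ[ℂ] (Fin 3 → ℂ)))
    {v w : Fin 2 → ℂ}
    (h : ∑ i, ∑ j, (v i * w j + w i * v j) • phiPure ρ (Pi.single i 1) (Pi.single j 1) = 0)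
    (k l : Fin 3) : ρ k v ⨯₃ ρ l w = ρ l v ⨯₃ ρ k w := by
  refine cross_symm_of_forall_add_eq_zero (a := fun k => ρ k v) (b := fun k => ρ k w)
    (fun p => ?_) k l
  let B := (crossProduct ∘ₗ ρ (p + 1)).compl₂ (ρ (p + 2))
  have hp := congrArg (wedgeTensorEval ℂ p) h
  simp only [map_sum, map_smul, wedgeTensorEval_phiPure, map_zero] at hp
  have hB := (B + B.flip).sum_sum_symm_smul_apply_single v w
  simp only [B, LinearMap.add_apply, LinearMap.flip_apply, LinearMap.compl₂_apply,
    LinearMap.comp_apply, hp] at hB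
  rw [add_comm (ρ (p + 1) w ⨯₃ _), ← two_smul ℂ] at hB
  exact (smul_eq_zero.mp hB.symm).resolve_left two_ne_zero

namespace KStable

variable {ρ : Fin 3 → ((Fin 2 → ℂ) →ₗ[ℂ] (Fin 3 → ℂ))}

lemma exists_cross_ne_zero (hstab : KStable ρ) {u : Fin 2 → ℂ} (hu : u ≠ 0) :
    ∃ k l, ρ k u ⨯₃ ρ l u ≠ 0 := by
  by_contra! h
  have hU₁ : Module.finrank ℂ (ℂ ∙ u) = 1 := finrank_span_singleton hu
  have hsub : ∀ k, (ℂ ∙ u).map (ρ k) ≤ Submodule.span ℂ (Set.range fun k => ρ k u) := by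
    intro k
    rw [Submodule.map_span, Set.image_singleton, Submodule.span_le, Set.singleton_subset_iff]
    exact Submodule.subset_span (Set.mem_range_self k)
  have hlt := hstab _ _ hsub (fun h => hu (Submodule.span_singleton_eq_bot.mp h.1))
    (fun h => by rw [h.1, finrank_top, Module.finrank_fin_fun] at hU₁; omega)
  have hle := finrank_span_range_le_one_of_cross_eq_zero (x := fun k => ρ k u) h
  omega

lemma iSup_range_eq_top (hstab : KStable ρ) : ⨆ k, LinearMap.range (ρ k) = ⊤ := by
  by_contra hne
  have hsub : ∀ k, (⊤ : Submodule ℂ (Fin 2 → ℂ)).map (ρ k) ≤ ⨆ k, LinearMap.range (ρ k) :=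
    fun k => (Submodule.map_top (ρ k)).trans_le (le_iSup (fun k => LinearMap.range (ρ k)) k)
  have hlt := hstab ⊤ _ hsub (fun h => top_ne_bot h.1) (fun h => hne h.2)
  have hle := Submodule.finrank_lt hne
  simp only [finrank_top, Module.finrank_fin_fun] at hlt hle
  omega

lemma eq_zero_of_dotProduct_eq_zero (hstab : KStable ρ) {v w : Fin 2 → ℂ}
    (hvw : LinearIndependent ℂ ![v, w]) {z : Fin 3 → ℂ}
    (hz : ∀ k, z ⬝ᵥ ρ k v = 0 ∧ z ⬝ᵥ ρ k w = 0) : z = 0 := by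
  let b := basisOfLinearIndependentOfCardEqFinrank hvw (by simp)
  have hker : ⨆ k, LinearMap.range (ρ k) ≤ LinearMap.ker (dotProductBilin ℂ ℂ z) := by
    refine iSup_le fun k => LinearMap.range_le_ker_iff.mpr (b.ext fun i => ?_)
    fin_cases i <;> simp [b, hz k]
  rw [hstab.iSup_range_eq_top, top_le_iff, LinearMap.ker_eq_top] at hker
  exact dotProduct_eq_zero z fun x => LinearMap.congr_fun hker x

lemma false_of_cross_symm_of_linearIndependent (hstab : KStable ρ) {v w : Fin 2 → ℂ}
    (hvw : LinearIndependent ℂ ![v, w]) (H : ∀ k l, ρ k v ⨯₃ ρ l w = ρ l v ⨯₃ ρ k w) :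
    False := by
  have hv : v ≠ 0 := by simpa using hvw.ne_zero 0
  have hw : w ≠ 0 := by simpa using hvw.ne_zero 1
  set a := fun k => ρ k v
  set b := fun k => ρ k w
  have haab : ∀ m k l, a m ⬝ᵥ a k ⨯₃ b l = 0 := dotProduct_cross_eq_zero_of_cross_symm H
  have hbba : ∀ m k l, b m ⬝ᵥ b k ⨯₃ a l = 0 := dotProduct_cross_eq_zero_of_cross_symm
    fun k l => by rw [← cross_anticomm, ← H, cross_anticomm]
  obtain ⟨p, q, hpq⟩ := hstab.exists_cross_ne_zero hv
  by_cases hr : ∃ r, a r ⬝ᵥ a p ⨯₃ a q ≠ 0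
  · obtain ⟨r, hr⟩ := hr
    obtain ⟨p', q', hpq'⟩ := hstab.exists_cross_ne_zero hw
    have hperp : ∀ l, (b p' ⨯₃ b q') ⬝ᵥ a l = 0 := fun l => by
      rw [dotProduct_comm, triple_product_permutation, hbba]
    exact hpq' (eq_zero_of_dotProduct_eq_zero_of_triple_product_ne_zero hr
      (hperp r) (hperp p) (hperp q))
  · push Not at hr
    refine hpq (hstab.eq_zero_of_dotProduct_eq_zero hvw fun k => ⟨?_, ?_⟩)
    · rw [dotProduct_comm]
      exact hr k
    · rw [dotProduct_comm, triple_product_permutation, haab]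

lemma false_of_cross_symm (hstab : KStable ρ) {v w : Fin 2 → ℂ} (hv : v ≠ 0) (hw : w ≠ 0)
    (H : ∀ k l, ρ k v ⨯₃ ρ l w = ρ l v ⨯₃ ρ k w) : False := by
  by_cases hvw : LinearIndependent ℂ ![v, w]
  · exact hstab.false_of_cross_symm_of_linearIndependent hvw H
  obtain ⟨t, rfl⟩ : ∃ t : ℂ, t • w = v := by
    simpa [linearIndependent_fin2, hw] using hvw
  have ht : t ≠ 0 := by rintro rfl; simp at hv
  obtain ⟨k, l, hkl⟩ := hstab.exists_cross_ne_zero hw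
  have hsymm : ρ k w ⨯₃ ρ l w = ρ l w ⨯₃ ρ k w := by
    simpa [ht] using H k l
  rw [← cross_anticomm (ρ k w) (ρ l w)] at hsymm
  exact hkl (self_eq_neg.mp hsymm)

end KStable

/-- If `(ρ₁,ρ₂,ρ₃)` is a stable representation of the 3-Kronecker quiver of
dimension vector `(2,3)`, then the linear map `Φ : S²(ℂ²) → ⋀²(ℂ³) ⊗ ⋀²(ℂ³)` determined by
`Φ(v·w) = Σ_{1≤k<l≤3} (ρ_k(v) ∧ ρ_l(w) + ρ_k(w) ∧ ρ_l(v)) ⊗ (e_k ∧ e_l)` is injective: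
identifying `S²(ℂ²)` with symmetric 2×2 coefficient matrices, any symmetric combination of
the values of `Φ` on the basis vectors that vanishes has zero coefficients. -/
theorem stmt11 (ρ : Fin 3 → ((Fin 2 → ℂ) →ₗ[ℂ] (Fin 3 → ℂ))) (hstab : KStable ρ) :
    ∀ c : Matrix (Fin 2) (Fin 2) ℂ, c.IsSymm →
      (∑ i : Fin 2, ∑ j : Fin 2,
        c i j • phiPure ρ (Pi.single i 1) (Pi.single j 1)) = 0 → c = 0 := by
  intro c hc hΦ
  obtain ⟨v, w, rfl⟩ := hc.exists_eq_vecMulVec_add_vecMulVec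
  by_contra hne
  have hv : v ≠ 0 := by rintro rfl; simp at hne
  have hw : w ≠ 0 := by rintro rfl; simp at hne
  simp only [Matrix.add_apply, vecMulVec_apply] at hΦ
  exact hstab.false_of_cross_symm hv hw (cross_symm_of_sum_smul_phiPure_eq_zero ρ hΦ)
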